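/- If ξ : S_{=ℓ} → ℚ satisfies E'(ξ)(U) = 0 for every U ∈ S_{<ℓ}, then ∑_{V ∈ S_{=ℓ}} ξ(V) 1_V = 0 as a function M → ℚ; that is, for every x ∈ M, ∑_{V ∈ S_{=ℓ}, x ∈ V} ξ(V) = 0. -/
import Mathlib


variable (F : Type) [Field F] [Fintype F] (k m : ℕ)

/-- The matrix module `M = M_{k×m}(F)` as a left module over `R = M_{k×k}(F)`
via matrix multiplication. -/
instance matSMul : SMul (Matrix (Fin k) (Fin k) F) (Matrix (Fin k) (Fin m) F) :=
  ⟨fun A X => A * X⟩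

instance matModule : Module (Matrix (Fin k) (Fin k) F) (Matrix (Fin k) (Fin m) F) where
  one_smul X := Matrix.one_mul X
  mul_smul A B X := Matrix.mul_assoc A B X
  smul_zero A := Matrix.mul_zero A
  smul_add A X Y := Matrix.mul_add A X Y
  add_smul A B X := Matrix.add_mul A B X
  zero_smul X := Matrix.zero_mul X

instance matTower :
    IsScalarTower F (Matrix (Fin k) (Fin k) F) (Matrix (Fin k) (Fin m) F) :=
  ⟨fun c A X => Matrix.smul_mul c A X⟩

noncomputable instance :
    Fintype (Submodule (Matrix (Fin k) (Fin k) F) (Matrix (Fin k) (Fin m) F)) :=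
  Fintype.ofFinite _

/-- The dimension of an `R`-submodule `U ⊆ M`, i.e. `dim_{F_q}(U) / k`. -/
noncomputable def dimk
    (U : Submodule (Matrix (Fin k) (Fin k) F) (Matrix (Fin k) (Fin m) F)) : ℕ :=
  Module.finrank F (U.restrictScalars F) / k

open Classical in
/-- `η_V(U) = (−1)^(dim V − dim U) · q^(binom(dim V − dim U, 2))` if `U ⊆ V`, else `0`. -/
noncomputable def etaV
    (V U : Submodule (Matrix (Fin k) (Fin k) F) (Matrix (Fin k) (Fin m) F)) : ℚ :=
  if U ≤ V then
    (-1 : ℚ) ^ (dimk F k m V - dimk F k m U) *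
      (Fintype.card F : ℚ) ^ ((dimk F k m V - dimk F k m U).choose 2)
  else 0

open Classical in
/-- If `ξ : S_{=ℓ} → ℚ` is in the kernel of `E'`, i.e. `∑_{V ∈ S_{=ℓ}} ξ(V) η_V(U) = 0`
for every `U ∈ S_{<ℓ}`, then `∑_{V ∈ S_{=ℓ}} ξ(V) 1_V = 0` as a function `M → ℚ`. -/
theorem sum_indicator_eq_zero_of_ker_E' (hk : 0 < k) (l : ℕ) (hl : l > k) (hml : m ≥ l)
    (X : Submodule (Matrix (Fin k) (Fin k) F) (Matrix (Fin k) (Fin m) F))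
    (hX : dimk F k m X = m - l)
    (ξ : {V : Submodule (Matrix (Fin k) (Fin k) F) (Matrix (Fin k) (Fin m) F) //
            dimk F k m V = l ∧ V ⊓ X = ⊥} → ℚ)
    (hker : ∀ U : Submodule (Matrix (Fin k) (Fin k) F) (Matrix (Fin k) (Fin m) F),
      dimk F k m U < l → U ⊓ X = ⊥ →
      ∑ V : {V : Submodule (Matrix (Fin k) (Fin k) F) (Matrix (Fin k) (Fin m) F) //
               dimk F k m V = l ∧ V ⊓ X = ⊥},
        ξ V * etaV F k m (V : Submodule (Matrix (Fin k) (Fin k) F) (Matrix (Fin k) (Fin m) F)) U = 0) :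
    ∀ x : Matrix (Fin k) (Fin m) F,
      ∑ V : {V : Submodule (Matrix (Fin k) (Fin k) F) (Matrix (Fin k) (Fin m) F) //
               dimk F k m V = l ∧ V ⊓ X = ⊥},
        ξ V * Set.indicator ((V : Submodule (Matrix (Fin k) (Fin k) F) (Matrix (Fin k) (Fin m) F)) :
            Set (Matrix (Fin k) (Fin m) F)) (fun _ => (1 : ℚ)) x = 0 := by
  classical
  intro x
  set W : Submodule (Matrix (Fin k) (Fin k) F) (Matrix (Fin k) (Fin m) F) :=
    Submodule.span (Matrix (Fin k) (Fin k) F) {x} with hW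
  by_cases hWX : W ⊓ X = ⊥
  · -- dimension bound on W
    have hfin : Module.finrank F (W.restrictScalars F) ≤ k * k := by
      have hle : W.restrictScalars F ≤
          LinearMap.range ((LinearMap.toSpanSingleton (Matrix (Fin k) (Fin k) F) (Matrix (Fin k) (Fin m) F) x).restrictScalars F) := by
        intro y hy
        rw [Submodule.restrictScalars_mem, hW, Submodule.mem_span_singleton] at hy
        obtain ⟨a, ha⟩ := hy
        exact ⟨a, ha⟩
      calc Module.finrank F (W.restrictScalars F)
          ≤ Module.finrank F
            (LinearMap.range ((LinearMap.toSpanSingleton (Matrix (Fin k) (Fin k) F) (Matrix (Fin k) (Fin m) F) x).restrictScalars F)) :=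
            Submodule.finrank_mono hle
        _ ≤ Module.finrank F (Matrix (Fin k) (Fin k) F) := LinearMap.finrank_range_le _
        _ = k * k := by
            simp [Module.finrank_matrix]
    have hdim : dimk F k m W < l := by
      have : dimk F k m W ≤ k := by
        unfold dimk
        calc Module.finrank F (W.restrictScalars F) / k ≤ (k * k) / k :=
              Nat.div_le_div_right hfin
          _ = k := Nat.mul_div_cancel_left k hk
      omega
    have h0 := hker W hdim hWX
    set c : ℚ := (-1 : ℚ) ^ (l - dimk F k m W) *
        (Fintype.card F : ℚ) ^ ((l - dimk F k m W).choose 2) with hc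
    have hcne : c ≠ 0 := by
      apply mul_ne_zero (pow_ne_zero _ (by norm_num))
      exact pow_ne_zero _ (Nat.cast_ne_zero.mpr Fintype.card_ne_zero)
    have hterm : ∀ V : {V : Submodule (Matrix (Fin k) (Fin k) F) (Matrix (Fin k) (Fin m) F) // dimk F k m V = l ∧ V ⊓ X = ⊥},
        ξ V * etaV F k m (V : Submodule (Matrix (Fin k) (Fin k) F) (Matrix (Fin k) (Fin m) F)) W =
        c * (ξ V * Set.indicator ((V : Submodule (Matrix (Fin k) (Fin k) F) (Matrix (Fin k) (Fin m) F)) : Set (Matrix (Fin k) (Fin m) F)) (fun _ => (1 : ℚ)) x) := by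
      intro V
      by_cases hWV : W ≤ (V : Submodule (Matrix (Fin k) (Fin k) F) (Matrix (Fin k) (Fin m) F))
      · have hxV : x ∈ (V : Submodule (Matrix (Fin k) (Fin k) F) (Matrix (Fin k) (Fin m) F)) :=
          hWV (Submodule.mem_span_singleton_self x)
        rw [Set.indicator_of_mem hxV, etaV, if_pos hWV, V.2.1]
        ring
      · have hxV : x ∉ (V : Submodule (Matrix (Fin k) (Fin k) F) (Matrix (Fin k) (Fin m) F)) := fun h => hWV
          ((Submodule.span_singleton_le_iff_mem x _).mpr h)
        rw [Set.indicator_of_notMem hxV, etaV, if_neg hWV]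
        ring
    have hmul : c * ∑ V : {V : Submodule (Matrix (Fin k) (Fin k) F) (Matrix (Fin k) (Fin m) F) // dimk F k m V = l ∧ V ⊓ X = ⊥},
        ξ V * Set.indicator ((V : Submodule (Matrix (Fin k) (Fin k) F) (Matrix (Fin k) (Fin m) F)) : Set (Matrix (Fin k) (Fin m) F)) (fun _ => (1 : ℚ)) x = 0 := by
      rw [Finset.mul_sum]
      rw [← Finset.sum_congr rfl (fun V _ => hterm V)]
      exact h0
    exact (mul_eq_zero.mp hmul).resolve_left hcne
  · apply Finset.sum_eq_zero
    intro V _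
    have hxV : x ∉ (V : Submodule (Matrix (Fin k) (Fin k) F) (Matrix (Fin k) (Fin m) F)) := by
      intro h
      apply hWX
      have hWV : W ≤ (V : Submodule (Matrix (Fin k) (Fin k) F) (Matrix (Fin k) (Fin m) F)) :=
        (Submodule.span_singleton_le_iff_mem x _).mpr h
      have hle : W ⊓ X ≤ (V : Submodule (Matrix (Fin k) (Fin k) F) (Matrix (Fin k) (Fin m) F)) ⊓ X := inf_le_inf_right X hWV
      rw [V.2.2] at hle
      exact le_bot_iff.mp hle
    rw [Set.indicator_of_notMem hxV, mul_zero]
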